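/- Let n be a positive integer with n ≡ 2 (mod 8) and 3 ∤ n. Then R(3, Z_n, 2) = (n−2)(n−6)/8, where R(3, Z_n, 2) is the minimum number of monochromatic 3-term arithmetic progressions over all 2-colorings of Z_n. -/

import Mathlib

/-- The set of 3-term arithmetic progressions in `ZMod n`, as 3-element sets
`{a, a+b, a+2b}` with `b ≠ 0` and all elements distinct, each counted once. -/
def apSets (n : ℕ) [NeZero n] : Finset (Finset (ZMod n)) :=
  Finset.univ.filter (fun s =>
    (∃ a b : ZMod n, b ≠ 0 ∧ s = {a, a + b, a + 2 * b}) ∧ s.card = 3)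

/-- The number of monochromatic 3-term APs in `ZMod n` under the 2-coloring `χ`. -/
def monoAPCount (n : ℕ) [NeZero n] (χ : ZMod n → Fin 2) : ℕ :=
  ((apSets n).filter (fun s => ∀ x ∈ s, ∀ y ∈ s, χ x = χ y)).card

open Finset

section
set_option linter.unusedSectionVars false
variable (n : ℕ) [NeZero n]

lemma natCast_val_self (z : ZMod n) : ((z.val : ℕ) : ZMod n) = z := by
  rw [ZMod.natCast_val, ZMod.cast_id]

lemma ker2 (hn2 : n % 2 = 0) (z : ZMod n) : z + z = 0 ↔ z = 0 ∨ z = ((n/2 : ℕ) : ZMod n) := by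
  have hn : 0 < n := Nat.pos_of_ne_zero (NeZero.ne n)
  constructor
  · intro h
    have hv : ((z.val + z.val : ℕ) : ZMod n) = 0 := by push_cast [natCast_val_self]; exact h
    rw [ZMod.natCast_eq_zero_iff] at hv
    have hlt := ZMod.val_lt z
    rcases hv with ⟨c, hc⟩
    have hc2 : c = 0 ∨ c = 1 := by
      rcases Nat.lt_or_ge c 2 with h' | h'
      · omega
      · exfalso; nlinarith
    rcases hc2 with rfl | rfl
    · left
      have hz : z.val = 0 := by omega
      rw [← natCast_val_self n z, hz]; simp
    · right
      have hz : z.val = n / 2 := by omega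
      rw [← natCast_val_self n z, hz]
  · rintro (rfl | rfl)
    · simp
    · rw [← Nat.cast_add]
      have : n / 2 + n / 2 = n := by omega
      rw [this, ZMod.natCast_self]

lemma val_add_mod2 (hn2 : n % 2 = 0) (x y : ZMod n) : (x + y).val % 2 = (x.val + y.val) % 2 := by
  rw [ZMod.val_add, Nat.mod_mod_of_dvd _ ⟨n/2, by omega⟩]

lemma val_double_even (hn2 : n % 2 = 0) (d : ZMod n) : (d + d).val % 2 = 0 := by
  rw [val_add_mod2 n hn2]; omega

lemma half_ne_zero (hn8 : n % 8 = 2) : ((n/2 : ℕ) : ZMod n) ≠ 0 := by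
  rw [Ne, ZMod.natCast_eq_zero_iff]
  intro h
  have := Nat.le_of_dvd (by omega) h
  omega

lemma half_add_half (hn2 : n % 2 = 0) : ((n/2 : ℕ) : ZMod n) + ((n/2 : ℕ) : ZMod n) = 0 := by
  rw [← Nat.cast_add]
  have : n / 2 + n / 2 = n := by omega
  rw [this, ZMod.natCast_self]

-- fiber card lemma
lemma fiber_card (hn8 : n % 8 = 2) (c : ZMod n) :
    (univ.filter fun d : ZMod n => d + d = c).card = if c.val % 2 = 0 then 2 else 0 := by
  have hn2 : n % 2 = 0 := by omega
  split_ifs with hpar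
  · -- c.val even
    have hm : c = ((c.val / 2 : ℕ) : ZMod n) + ((c.val / 2 : ℕ) : ZMod n) := by
      rw [← Nat.cast_add]
      have h2 : c.val / 2 + c.val / 2 = c.val := by omega
      rw [h2, natCast_val_self]
    set m : ZMod n := ((c.val / 2 : ℕ) : ZMod n) with hmdef
    have hset : (univ.filter fun d : ZMod n => d + d = c) = {m, m + ((n/2 : ℕ) : ZMod n)} := by
      ext d
      simp only [mem_filter, mem_univ, true_and, mem_insert, mem_singleton]
      constructor
      · intro hd
        have : (d - m) + (d - m) = 0 := by
          linear_combination hd + hm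
        rcases (ker2 n hn2 _).mp this with h0 | h0
        · left; linear_combination h0
        · right; linear_combination h0
      · rintro (rfl | rfl)
        · exact hm.symm
        · rw [hm]
          have := half_add_half n hn2
          linear_combination this
    rw [hset, card_insert_of_notMem, card_singleton]
    simp only [mem_singleton]
    intro h
    exact half_ne_zero n hn8 (by linear_combination -h)
  · -- c.val odd: empty
    rw [card_eq_zero, filter_eq_empty_iff]
    intro d _ hd
    have := val_double_even n hn2 d
    rw [hd] at this
    omega

def ii : Fin 2 → ℤ := fun u => if u = 1 then 1 else 0

variable (χ : ZMod n → Fin 2)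

def aC : ℕ := (univ.filter fun x : ZMod n => χ x = 1).card
def pC : ℕ := (univ.filter fun x : ZMod n => x.val % 2 = 0 ∧ χ x = 1).card
def qC : ℕ := (univ.filter fun x : ZMod n => x.val % 2 = 1 ∧ χ x = 1).card

lemma ind_eq (u v w : Fin 2) :
    (if (u = v ∧ u = w) then (1:ℤ) else 0)
      = 1 - ii u - ii v - ii w + ii u * ii v + ii u * ii w + ii v * ii w := by
  revert u v w; decide

lemma sum_ii : ∑ x : ZMod n, ii (χ x) = (aC n χ : ℤ) := by
  rw [aC]
  rw [← Finset.sum_boole]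
  rfl

lemma sum_ii_shift (c : ZMod n) : ∑ x : ZMod n, ii (χ (c + x)) = (aC n χ : ℤ) := by
  rw [← sum_ii n χ]
  exact Fintype.sum_equiv (Equiv.addLeft c) _ _ (fun x => rfl)

lemma sum_double (hn8 : n % 8 = 2) (f : ZMod n → ℤ) :
    ∑ d : ZMod n, f (d + d) = 2 * ∑ z ∈ univ.filter (fun z : ZMod n => z.val % 2 = 0), f z := by
  have h1 : ∑ d : ZMod n, f (d + d)
      = ∑ c : ZMod n, ∑ d ∈ univ.filter (fun d : ZMod n => d + d = c), f (d + d) :=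
    (Finset.sum_fiberwise_of_maps_to (fun d _ => mem_univ _) _).symm
  rw [h1]
  have h2 : ∀ c : ZMod n, ∑ d ∈ univ.filter (fun d : ZMod n => d + d = c), f (d + d)
      = (if c.val % 2 = 0 then (2:ℤ) else 0) * f c := by
    intro c
    rw [Finset.sum_congr rfl (fun d hd => by rw [(mem_filter.mp hd).2]), Finset.sum_const,
      fiber_card n hn8]
    split_ifs <;> simp
  rw [Finset.sum_congr rfl (fun c _ => h2 c)]
  have h3 : ∀ c : ZMod n, (if c.val % 2 = 0 then (2:ℤ) else 0) * f c
      = if c.val % 2 = 0 then 2 * f c else 0 := fun c => by split_ifs <;> ring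
  rw [Finset.sum_congr rfl (fun c _ => h3 c), ← Finset.sum_filter, Finset.mul_sum]

lemma sum_even_shift (hn2 : n % 2 = 0) (x : ZMod n) :
    ∑ z ∈ univ.filter (fun z : ZMod n => z.val % 2 = 0), ii (χ (x + z))
      = if x.val % 2 = 0 then (pC n χ : ℤ) else (qC n χ : ℤ) := by
  have key : ∑ z ∈ univ.filter (fun z : ZMod n => z.val % 2 = 0), ii (χ (x + z))
      = ∑ w ∈ univ.filter (fun w : ZMod n => w.val % 2 = x.val % 2), ii (χ w) := by
    refine Finset.sum_nbij' (fun z => x + z) (fun w => w - x) ?_ ?_ ?_ ?_ ?_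
    · intro z hz
      simp only [mem_filter, mem_univ, true_and] at hz ⊢
      rw [val_add_mod2 n hn2]; omega
    · intro w hw
      simp only [mem_filter, mem_univ, true_and] at hw ⊢
      have h := val_add_mod2 n hn2 x (w - x)
      rw [add_sub_cancel] at h
      omega
    · intro z _; ring
    · intro w _; ring
    · intro z _; rfl
  rw [key]
  split_ifs with hx
  · rw [hx, pC, ← Finset.sum_boole, Finset.sum_filter]
    refine Finset.sum_congr rfl fun z _ => ?_
    by_cases h1 : z.val % 2 = 0 <;> by_cases h2 : χ z = 1 <;> simp [h1, h2, ii]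
  · have hx1 : x.val % 2 = 1 := by omega
    rw [hx1, qC, ← Finset.sum_boole, Finset.sum_filter]
    refine Finset.sum_congr rfl fun z _ => ?_
    by_cases h1 : z.val % 2 = 1 <;> by_cases h2 : χ z = 1 <;> simp [h1, h2, ii]

lemma sum_shiftL (f : ZMod n → ℤ) (c : ZMod n) : ∑ x : ZMod n, f (c + x) = ∑ x : ZMod n, f x :=
  Fintype.sum_equiv (Equiv.addLeft c) _ _ fun x => rfl

lemma sum_reflL (f : ZMod n → ℤ) (c : ZMod n) : ∑ x : ZMod n, f (c - x) = ∑ x : ZMod n, f x :=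
  Fintype.sum_equiv (Equiv.subLeft c) _ _ fun x => rfl

lemma card_val_filter (Pred : ℕ → Prop) [DecidablePred Pred] :
    (univ.filter fun x : ZMod n => Pred x.val).card = ((range n).filter Pred).card := by
  refine Finset.card_nbij (fun x => x.val) ?_ ?_ ?_
  · intro x hx
    simp only [mem_coe, mem_filter, mem_univ, true_and, mem_range] at hx ⊢
    exact ⟨ZMod.val_lt x, hx⟩
  · intro x hx y hy hxy
    exact ZMod.val_injective n hxy
  · intro m hm
    simp only [Finset.coe_filter, Set.mem_image, Set.mem_setOf_eq, mem_range, mem_univ,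
      true_and] at hm ⊢
    exact ⟨(m : ZMod n), by rw [ZMod.val_cast_of_lt hm.1]; exact ⟨hm.2, rfl⟩⟩

lemma card_evens (hn2 : n % 2 = 0) :
    (univ.filter fun x : ZMod n => x.val % 2 = 0).card = n / 2 := by
  have h := card_val_filter n (fun v => v % 2 = 0)
  rw [h]
  have himg : (range n).filter (fun m => m % 2 = 0) = (range (n/2)).image (fun k => 2 * k) := by
    ext m
    simp only [mem_filter, mem_range, mem_image]
    constructor
    · intro ⟨h1, h2⟩; exact ⟨m / 2, by omega, by omega⟩
    · rintro ⟨k, hk, rfl⟩; omega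
  rw [himg, Finset.card_image_of_injective _ (fun a b h => by omega), card_range]

lemma card_odds (hn2 : n % 2 = 0) :
    (univ.filter fun x : ZMod n => ¬ (x.val % 2 = 0)).card = n / 2 := by
  have := Finset.card_filter_add_card_filter_not (s := (univ : Finset (ZMod n)))
    (p := fun x : ZMod n => x.val % 2 = 0)
  rw [card_univ, ZMod.card, card_evens n hn2] at this
  omega

lemma sum_ii_even : ∑ x ∈ univ.filter (fun x : ZMod n => x.val % 2 = 0), ii (χ x) = (pC n χ : ℤ) := by
  rw [pC, ← Finset.sum_boole, Finset.sum_filter]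
  refine Finset.sum_congr rfl fun z _ => ?_
  by_cases h1 : z.val % 2 = 0 <;> by_cases h2 : χ z = 1 <;> simp [h1, h2, ii]

lemma sum_ii_odd : ∑ x ∈ univ.filter (fun x : ZMod n => ¬ (x.val % 2 = 0)), ii (χ x) = (qC n χ : ℤ) := by
  rw [qC, ← Finset.sum_boole, Finset.sum_filter]
  refine Finset.sum_congr rfl fun z _ => ?_
  by_cases h1 : z.val % 2 = 0 <;> by_cases h2 : χ z = 1 <;> simp [h1, h2, ii] <;> omega

lemma pq_add (χ : ZMod n → Fin 2) : pC n χ + qC n χ = aC n χ := by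
  have h := Finset.card_filter_add_card_filter_not
    (s := (univ.filter fun x : ZMod n => χ x = 1)) (p := fun x : ZMod n => x.val % 2 = 0)
  rw [Finset.filter_filter, Finset.filter_filter] at h
  rw [pC, qC, aC, ← h]
  have e1 : (univ.filter fun x : ZMod n => x.val % 2 = 0 ∧ χ x = 1)
      = (univ.filter fun a : ZMod n => χ a = 1 ∧ a.val % 2 = 0) := by
    ext x; simp only [mem_filter, mem_univ, true_and]; tauto
  have e2 : (univ.filter fun x : ZMod n => x.val % 2 = 1 ∧ χ x = 1)
      = (univ.filter fun a : ZMod n => χ a = 1 ∧ ¬ (a.val % 2 = 0)) := by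
    ext x; simp only [mem_filter, mem_univ, true_and]
    constructor
    · intro ⟨h1, h2⟩; exact ⟨h2, by omega⟩
    · intro ⟨h1, h2⟩; exact ⟨by omega, h1⟩
  rw [e1, e2]

lemma T3_card (hn8 : n % 8 = 2) (χ : ZMod n → Fin 2) :
    (((univ : Finset (ZMod n × ZMod n)).filter fun pr =>
        χ pr.1 = χ (pr.1 + pr.2) ∧ χ pr.1 = χ (pr.1 + pr.2 + pr.2)).card : ℤ)
      = n^2 - 3*n*(aC n χ) + 2*(aC n χ)^2 + 2*((pC n χ)^2 + (qC n χ)^2) := by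
  have hn2 : n % 2 = 0 := by omega
  have hcast : (((univ : Finset (ZMod n × ZMod n)).filter fun pr =>
        χ pr.1 = χ (pr.1 + pr.2) ∧ χ pr.1 = χ (pr.1 + pr.2 + pr.2)).card : ℤ)
      = ∑ x : ZMod n, ∑ d : ZMod n,
          (if (χ x = χ (x + d) ∧ χ x = χ (x + d + d)) then (1:ℤ) else 0) := by
    rw [Finset.card_filter]
    rw [← Finset.univ_product_univ, Finset.sum_product]
    push_cast
    rfl
  rw [hcast]
  have inner : ∀ x : ZMod n, ∑ d : ZMod n,
      (if (χ x = χ (x + d) ∧ χ x = χ (x + d + d)) then (1:ℤ) else 0)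
      = (n : ℤ) - n * ii (χ x) - (aC n χ : ℤ)
        - 2 * (if x.val % 2 = 0 then (pC n χ : ℤ) else (qC n χ : ℤ))
        + ii (χ x) * (aC n χ : ℤ)
        + ii (χ x) * (2 * (if x.val % 2 = 0 then (pC n χ : ℤ) else (qC n χ : ℤ)))
        + ∑ y : ZMod n, ii (χ y) * ii (χ (y + y - x)) := by
    intro x
    rw [Finset.sum_congr rfl fun d _ => ind_eq (χ x) (χ (x + d)) (χ (x + d + d))]
    simp only [Finset.sum_add_distrib, Finset.sum_sub_distrib]
    have h1 : ∑ _d : ZMod n, (1:ℤ) = (n:ℤ) := by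
      rw [Finset.sum_const, card_univ, ZMod.card, nsmul_eq_mul, mul_one]
    have h2 : ∑ _d : ZMod n, ii (χ x) = (n:ℤ) * ii (χ x) := by
      rw [Finset.sum_const, card_univ, ZMod.card, nsmul_eq_mul]
    have h3 : ∑ d : ZMod n, ii (χ (x + d)) = (aC n χ : ℤ) := sum_ii_shift n χ x
    have h4 : ∑ d : ZMod n, ii (χ (x + d + d))
        = 2 * (if x.val % 2 = 0 then (pC n χ : ℤ) else (qC n χ : ℤ)) := by
      calc ∑ d : ZMod n, ii (χ (x + d + d))
          = ∑ d : ZMod n, ii (χ (x + (d + d))) :=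
            Finset.sum_congr rfl fun d _ => by rw [add_assoc]
        _ = 2 * ∑ z ∈ univ.filter (fun z : ZMod n => z.val % 2 = 0), ii (χ (x + z)) :=
            sum_double n hn8 (fun c => ii (χ (x + c)))
        _ = 2 * (if x.val % 2 = 0 then (pC n χ : ℤ) else (qC n χ : ℤ)) := by
            rw [sum_even_shift n χ hn2 x]
    have h5 : ∑ d : ZMod n, ii (χ x) * ii (χ (x + d)) = ii (χ x) * (aC n χ : ℤ) := by
      rw [← Finset.mul_sum, h3]
    have h6 : ∑ d : ZMod n, ii (χ x) * ii (χ (x + d + d))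
        = ii (χ x) * (2 * (if x.val % 2 = 0 then (pC n χ : ℤ) else (qC n χ : ℤ))) := by
      rw [← Finset.mul_sum, h4]
    have h7 : ∑ d : ZMod n, ii (χ (x + d)) * ii (χ (x + d + d))
        = ∑ y : ZMod n, ii (χ y) * ii (χ (y + y - x)) := by
      have e : ∀ d : ZMod n, ii (χ (x + d)) * ii (χ (x + d + d))
          = (fun y => ii (χ y) * ii (χ (y + y - x))) (x + d) := by
        intro d; simp only []
        congr 2
        ring
      rw [Finset.sum_congr rfl fun d _ => e d]
      exact sum_shiftL n (fun y => ii (χ y) * ii (χ (y + y - x))) x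
    rw [h1, h2, h3, h4, h5, h6, h7]
  rw [Finset.sum_congr rfl fun x _ => inner x]
  simp only [Finset.sum_add_distrib, Finset.sum_sub_distrib]
  have g1 : ∑ _x : ZMod n, (n:ℤ) = (n:ℤ) * n := by
    rw [Finset.sum_const, card_univ, ZMod.card, nsmul_eq_mul]
  have g2 : ∑ x : ZMod n, (n:ℤ) * ii (χ x) = n * (aC n χ : ℤ) := by
    rw [← Finset.mul_sum, sum_ii]
  have g3 : ∑ _x : ZMod n, (aC n χ : ℤ) = (n:ℤ) * (aC n χ : ℤ) := by
    rw [Finset.sum_const, card_univ, ZMod.card, nsmul_eq_mul]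
  have g4 : ∑ x : ZMod n, 2 * (if x.val % 2 = 0 then (pC n χ : ℤ) else (qC n χ : ℤ))
      = 2 * (((n/2 : ℕ) : ℤ) * ((pC n χ : ℤ) + (qC n χ : ℤ))) := by
    rw [← Finset.mul_sum]
    congr 1
    rw [← Finset.sum_filter_add_sum_filter_not univ (fun x : ZMod n => x.val % 2 = 0)]
    rw [Finset.sum_congr rfl (fun x hx => if_pos ((mem_filter.mp hx).2)),
      Finset.sum_congr rfl (fun x hx => if_neg ((mem_filter.mp hx).2)),
      Finset.sum_const, Finset.sum_const, card_evens n hn2, card_odds n hn2, nsmul_eq_mul,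
      nsmul_eq_mul]
    ring
  have g5 : ∑ x : ZMod n, ii (χ x) * (aC n χ : ℤ) = (aC n χ : ℤ) * (aC n χ : ℤ) := by
    rw [← Finset.sum_mul, sum_ii]
  have g6 : ∑ x : ZMod n, ii (χ x) * (2 * (if x.val % 2 = 0 then (pC n χ : ℤ) else (qC n χ : ℤ)))
      = 2 * ((pC n χ : ℤ) * (pC n χ : ℤ) + (qC n χ : ℤ) * (qC n χ : ℤ)) := by
    rw [← Finset.sum_filter_add_sum_filter_not univ (fun x : ZMod n => x.val % 2 = 0)]
    have e1 : ∑ x ∈ univ.filter (fun x : ZMod n => x.val % 2 = 0),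
        ii (χ x) * (2 * (if x.val % 2 = 0 then (pC n χ : ℤ) else (qC n χ : ℤ)))
        = 2 * (pC n χ : ℤ) * (pC n χ : ℤ) := by
      rw [Finset.sum_congr rfl (fun x hx => by
        rw [if_pos ((mem_filter.mp hx).2), mul_comm])]
      rw [← Finset.mul_sum, sum_ii_even]
    have e2 : ∑ x ∈ univ.filter (fun x : ZMod n => ¬ (x.val % 2 = 0)),
        ii (χ x) * (2 * (if x.val % 2 = 0 then (pC n χ : ℤ) else (qC n χ : ℤ)))
        = 2 * (qC n χ : ℤ) * (qC n χ : ℤ) := by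
      rw [Finset.sum_congr rfl (fun x hx => by
        rw [if_neg ((mem_filter.mp hx).2), mul_comm])]
      rw [← Finset.mul_sum, sum_ii_odd]
    rw [e1, e2]; ring
  have g7 : ∑ x : ZMod n, ∑ y : ZMod n, ii (χ y) * ii (χ (y + y - x))
      = (aC n χ : ℤ) * (aC n χ : ℤ) := by
    rw [Finset.sum_comm]
    have e1 : ∀ y : ZMod n, ∑ x : ZMod n, ii (χ y) * ii (χ (y + y - x))
        = ii (χ y) * (aC n χ : ℤ) := by
      intro y
      rw [← Finset.mul_sum, sum_reflL n (fun z => ii (χ z)) (y + y), sum_ii]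
    rw [Finset.sum_congr rfl fun y _ => e1 y, ← Finset.sum_mul, sum_ii]
  rw [g1, g2, g3, g4, g5, g6, g7]
  have hpq : (pC n χ : ℤ) + (qC n χ : ℤ) = (aC n χ : ℤ) := by
    have := pq_add n χ
    push_cast [← this]
    ring
  have h2n : ((n/2 : ℕ) : ℤ) * 2 = (n : ℤ) := by omega
  linear_combination (-(n:ℤ)) * hpq - ((pC n χ : ℤ) + (qC n χ : ℤ)) * h2n

lemma T3_split (hn8 : n % 8 = 2) (χ : ZMod n → Fin 2) :
    ((univ : Finset (ZMod n × ZMod n)).filter fun pr =>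
        χ pr.1 = χ (pr.1 + pr.2) ∧ χ pr.1 = χ (pr.1 + pr.2 + pr.2)).card
      = ((univ : Finset (ZMod n × ZMod n)).filter fun pr =>
          pr.2 ≠ 0 ∧ pr.2 + pr.2 ≠ 0 ∧ χ pr.1 = χ (pr.1 + pr.2) ∧ χ pr.1 = χ (pr.1 + pr.2 + pr.2)).card
        + n
        + (univ.filter fun x : ZMod n => χ x = χ (x + ((n/2 : ℕ) : ZMod n))).card := by
  have hn2 : n % 2 = 0 := by omega
  set T3 := (univ : Finset (ZMod n × ZMod n)).filter fun pr =>
        χ pr.1 = χ (pr.1 + pr.2) ∧ χ pr.1 = χ (pr.1 + pr.2 + pr.2) with hT3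
  have hsplit1 := Finset.card_filter_add_card_filter_not
    (s := T3) (p := fun pr : ZMod n × ZMod n => pr.2 + pr.2 = 0)
  have hsplit2 := Finset.card_filter_add_card_filter_not
    (s := T3.filter (fun pr : ZMod n × ZMod n => pr.2 + pr.2 = 0))
    (p := fun pr : ZMod n × ZMod n => pr.2 = 0)
  -- the zero part
  have hzero : ((T3.filter (fun pr : ZMod n × ZMod n => pr.2 + pr.2 = 0)).filter
      (fun pr : ZMod n × ZMod n => pr.2 = 0)).card = n := by
    have hset : (T3.filter (fun pr : ZMod n × ZMod n => pr.2 + pr.2 = 0)).filter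
        (fun pr : ZMod n × ZMod n => pr.2 = 0)
        = (univ : Finset (ZMod n)).image (fun x => (x, (0 : ZMod n))) := by
      ext pr
      simp only [hT3, Finset.mem_filter, Finset.mem_univ, true_and, Finset.mem_image]
      constructor
      · rintro ⟨⟨_, _⟩, h0⟩
        exact ⟨pr.1, by rw [← h0]⟩
      · rintro ⟨x, rfl⟩
        simp
    rw [hset, Finset.card_image_of_injective _ (fun a b h => by simpa using h), card_univ,
      ZMod.card]
  -- the half part
  have hhalf : ((T3.filter (fun pr : ZMod n × ZMod n => pr.2 + pr.2 = 0)).filter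
      (fun pr : ZMod n × ZMod n => ¬ (pr.2 = 0))).card
      = (univ.filter fun x : ZMod n => χ x = χ (x + ((n/2 : ℕ) : ZMod n))).card := by
    have hset : (T3.filter (fun pr : ZMod n × ZMod n => pr.2 + pr.2 = 0)).filter
        (fun pr : ZMod n × ZMod n => ¬ (pr.2 = 0))
        = (univ.filter fun x : ZMod n => χ x = χ (x + ((n/2 : ℕ) : ZMod n))).image
            (fun x => (x, ((n/2 : ℕ) : ZMod n))) := by
      ext pr
      simp only [hT3, Finset.mem_filter, Finset.mem_univ, true_and, Finset.mem_image]
      constructor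
      · rintro ⟨⟨⟨h1, h2⟩, h0⟩, hne⟩
        have : pr.2 = ((n/2 : ℕ) : ZMod n) := by
          rcases (ker2 n hn2 pr.2).mp h0 with h | h
          · exact absurd h hne
          · exact h
        exact ⟨pr.1, by rw [← this, ← Prod.mk.eta (p := pr)]; exact ⟨h1, rfl⟩⟩
      · rintro ⟨x, hx, rfl⟩
        refine ⟨⟨⟨hx, ?_⟩, half_add_half n hn2⟩, half_ne_zero n hn8⟩
        simp only [add_assoc, half_add_half n hn2, add_zero]
    rw [hset, Finset.card_image_of_injective _ (fun a b h => by simpa using h)]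
  -- the main part
  have hmain : (T3.filter (fun pr : ZMod n × ZMod n => ¬ (pr.2 + pr.2 = 0))).card
      = ((univ : Finset (ZMod n × ZMod n)).filter fun pr =>
          pr.2 ≠ 0 ∧ pr.2 + pr.2 ≠ 0 ∧ χ pr.1 = χ (pr.1 + pr.2) ∧ χ pr.1 = χ (pr.1 + pr.2 + pr.2)).card := by
    congr 1
    rw [hT3, Finset.filter_filter]
    apply Finset.filter_congr
    intro pr _
    constructor
    · rintro ⟨⟨h1, h2⟩, h3⟩
      exact ⟨fun h0 => h3 (by rw [h0, add_zero]), h3, h1, h2⟩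
    · rintro ⟨h0, h3, h1, h2⟩
      exact ⟨⟨h1, h2⟩, h3⟩
  omega


lemma two_mul_mono (hn8 : n % 8 = 2) (h3 : ¬ (3 ∣ n)) (χ : ZMod n → Fin 2) :
    ((univ : Finset (ZMod n × ZMod n)).filter fun pr =>
        pr.2 ≠ 0 ∧ pr.2 + pr.2 ≠ 0 ∧ χ pr.1 = χ (pr.1 + pr.2) ∧ χ pr.1 = χ (pr.1 + pr.2 + pr.2)).card
      = 2 * ((apSets n).filter (fun s => ∀ x ∈ s, ∀ y ∈ s, χ x = χ y)).card := by
  set DD := (univ : Finset (ZMod n × ZMod n)).filter fun pr =>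
        pr.2 ≠ 0 ∧ pr.2 + pr.2 ≠ 0 ∧ χ pr.1 = χ (pr.1 + pr.2) ∧ χ pr.1 = χ (pr.1 + pr.2 + pr.2)
    with hDD
  set monoS := (apSets n).filter (fun s => ∀ x ∈ s, ∀ y ∈ s, χ x = χ y) with hmonoS
  set g : ZMod n × ZMod n → Finset (ZMod n) :=
    fun pr => {pr.1, pr.1 + pr.2, pr.1 + pr.2 + pr.2} with hg
  have hu3 : IsUnit (3 : ZMod n) := by
    have h := (ZMod.isUnit_prime_iff_not_dvd (n := n) (p := 3) (by norm_num)).mpr h3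
    simpa using h
  have hmap : ∀ pr ∈ DD, g pr ∈ monoS := by
    rintro ⟨x, d⟩ hpr
    rw [hDD, Finset.mem_filter] at hpr
    obtain ⟨-, hd0, hdd0, hc1, hc2⟩ := hpr
    have hne1 : x ≠ x + d := fun h => hd0 (by linear_combination -h)
    have hne2 : x ≠ x + d + d := fun h => hdd0 (by linear_combination -h)
    have hne3 : x + d ≠ x + d + d := fun h => hd0 (by linear_combination -h)
    rw [hmonoS, Finset.mem_filter]
    have hcard : (g (x, d)).card = 3 := by
      rw [hg]
      rw [Finset.card_insert_of_notMem (by simp [hne1, hne2]),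
        Finset.card_insert_of_notMem (by simp [hne3]), Finset.card_singleton]
    refine ⟨?_, ?_⟩
    · rw [apSets, Finset.mem_filter]
      refine ⟨Finset.mem_univ _, ⟨x, d, hd0, ?_⟩, hcard⟩
      rw [hg]
      have : x + 2 * d = x + d + d := by ring
      rw [this]
    · have key : ∀ u ∈ g (x, d), χ u = χ x := by
        intro u hu
        rw [hg] at hu
        simp only [Finset.mem_insert, Finset.mem_singleton] at hu
        rcases hu with rfl | rfl | rfl
        · rfl
        · exact hc1.symm
        · exact hc2.symm
      intro u hu v hv
      rw [key u hu, key v hv]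
  have hfiber : ∀ s ∈ monoS, (DD.filter fun pr => g pr = s).card = 2 := by
    intro s hs
    rw [hmonoS, Finset.mem_filter] at hs
    obtain ⟨hsap, hmono⟩ := hs
    rw [apSets, Finset.mem_filter] at hsap
    obtain ⟨-, ⟨a, b, hb0, hsab⟩, hcard3⟩ := hsap
    have hbb0 : b + b ≠ 0 := by
      intro h
      have heq : a + 2 * b = a := by linear_combination h
      have hsub : s ⊆ {a, a + b} := by
        rw [hsab, heq]
        intro u hu
        simp only [Finset.mem_insert, Finset.mem_singleton] at hu ⊢
        tauto
      have := Finset.card_le_card hsub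
      have h2 : ({a, a + b} : Finset (ZMod n)).card ≤ 2 := Finset.card_insert_le _ _ |>.trans (by simp)
      omega
    have hmem_a : a ∈ s := by rw [hsab]; simp
    have hmem_ab : a + b ∈ s := by rw [hsab]; simp
    have hmem_a2b : a + 2 * b ∈ s := by rw [hsab]; simp
    have habb : a + b + b = a + 2 * b := by ring
    have hfib : DD.filter (fun pr => g pr = s) = {(a, b), (a + b + b, -b)} := by
      ext pr
      obtain ⟨x, d⟩ := pr
      simp only [Finset.mem_insert, Finset.mem_singleton, Finset.mem_filter, hDD,
        Finset.mem_univ, true_and, Prod.mk.injEq]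
      constructor
      · rintro ⟨⟨hd0, hdd0, hc1, hc2⟩, hgs⟩
        -- middle element is determined
        have hne1 : x ≠ x + d := fun h => hd0 (by linear_combination -h)
        have hne2 : x ≠ x + d + d := fun h => hdd0 (by linear_combination -h)
        have hne3 : x + d ≠ x + d + d := fun h => hd0 (by linear_combination -h)
        have hane1 : a ≠ a + b := fun h => hb0 (by linear_combination -h)
        have hane2 : a ≠ a + 2 * b := fun h => hbb0 (by linear_combination -h)
        have hane3 : a + b ≠ a + 2 * b := fun h => hb0 (by linear_combination -h)
        have hsum : x + (x + d) + (x + d + d) = a + (a + b) + (a + 2 * b) := by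
          have hsum1 : ∑ u ∈ g (x, d), u = x + (x + d) + (x + d + d) := by
            rw [hg]
            rw [Finset.sum_insert (by simp [hne1, hne2]),
              Finset.sum_insert (by simp [hne3]), Finset.sum_singleton]
            ring
          have hsum2 : ∑ u ∈ s, u = a + (a + b) + (a + 2 * b) := by
            rw [hsab]
            rw [Finset.sum_insert (by simp [hane1, hane2]),
              Finset.sum_insert (by simp [hane3]), Finset.sum_singleton]
            ring
          rw [← hsum1, hgs, hsum2]
        have hmid : x + d = a + b := by
          have h3eq : (3 : ZMod n) * (x + d) = (3 : ZMod n) * (a + b) := by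
            linear_combination hsum
          exact hu3.mul_left_cancel h3eq
        have hxs : x ∈ s := by rw [← hgs, hg]; simp
        rw [hsab] at hxs
        simp only [Finset.mem_insert, Finset.mem_singleton] at hxs
        rcases hxs with rfl | rfl | rfl
        · left; exact ⟨rfl, by linear_combination hmid⟩
        · exfalso; exact hd0 (by linear_combination hmid)
        · right; exact ⟨by linear_combination, by linear_combination hmid⟩
      · rintro (⟨rfl, rfl⟩ | ⟨rfl, rfl⟩)
        · refine ⟨⟨hb0, hbb0, ?_, ?_⟩, ?_⟩
          · exact hmono _ hmem_a _ hmem_ab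
          · rw [habb]; exact hmono _ hmem_a _ hmem_a2b
          · show (g (x, d)) = s
            rw [hg]
            show ({x, x + d, x + d + d} : Finset (ZMod n)) = s
            rw [habb, hsab]
        · have e1 : a + b + b + -b = a + b := by ring
          have e2 : a + b + b + -b + -b = a := by ring
          refine ⟨⟨by simpa using hb0, ?_, ?_, ?_⟩, ?_⟩
          · intro h; exact hbb0 (by linear_combination -h)
          · rw [e1, habb]; exact hmono _ hmem_a2b _ hmem_ab
          · rw [e2, habb]; exact hmono _ hmem_a2b _ hmem_a
          · show ({a + b + b, a + b + b + -b, a + b + b + -b + -b} : Finset (ZMod n)) = s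
            rw [e2, e1, hsab, habb]
            ext u
            simp only [Finset.mem_insert, Finset.mem_singleton]
            tauto
    rw [hfib]
    rw [Finset.card_insert_of_notMem, Finset.card_singleton]
    simp only [Finset.mem_singleton, Prod.mk.injEq, not_and]
    intro h1 h2
    exact hbb0 (by linear_combination h2)
  rw [Finset.card_eq_sum_card_fiberwise hmap]
  rw [Finset.sum_congr rfl hfiber, Finset.sum_const, smul_eq_mul, mul_comm]


lemma ind2_eq (u v : Fin 2) :
    (if u = v then (1:ℤ) else 0) = 1 - ii u - ii v + 2 * (ii u * ii v) := by
  revert u v; decide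

lemma P_parity (hn2 : n % 2 = 0) (χ : ZMod n → Fin 2) :
    ∃ kk : ℤ, ((univ.filter fun x : ZMod n => χ x = χ (x + ((n/2 : ℕ) : ZMod n))).card : ℤ)
      = n - 2 * (aC n χ : ℤ) + 2 * kk := by
  refine ⟨∑ x : ZMod n, ii (χ x) * ii (χ (x + ((n/2 : ℕ) : ZMod n))), ?_⟩
  rw [Finset.card_filter]
  push_cast
  have hpt : ∀ x : ZMod n, (if χ x = χ (x + ((n/2 : ℕ) : ZMod n)) then (1:ℤ) else 0)
      = 1 - ii (χ x) - ii (χ (x + ((n/2 : ℕ) : ZMod n)))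
        + 2 * (ii (χ x) * ii (χ (x + ((n/2 : ℕ) : ZMod n)))) :=
    fun x => ind2_eq _ _
  rw [Finset.sum_congr rfl fun x _ => hpt x]
  simp only [Finset.sum_add_distrib, Finset.sum_sub_distrib]
  have h1 : ∑ _x : ZMod n, (1:ℤ) = (n:ℤ) := by
    rw [Finset.sum_const, card_univ, ZMod.card, nsmul_eq_mul, mul_one]
  have h2 : ∑ x : ZMod n, ii (χ x) = (aC n χ : ℤ) := sum_ii n χ
  have h3 : ∑ x : ZMod n, ii (χ (x + ((n/2 : ℕ) : ZMod n))) = (aC n χ : ℤ) := by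
    have e : ∀ x : ZMod n, ii (χ (x + ((n/2 : ℕ) : ZMod n)))
        = (fun z => ii (χ z)) (((n/2 : ℕ) : ZMod n) + x) := fun x => by
      simp only []; rw [add_comm]
    rw [Finset.sum_congr rfl fun x _ => e x, sum_shiftL n (fun z => ii (χ z))]
    exact sum_ii n χ
  have h4 : ∑ x : ZMod n, 2 * (ii (χ x) * ii (χ (x + ((n/2 : ℕ) : ZMod n))))
      = 2 * ∑ x : ZMod n, ii (χ x) * ii (χ (x + ((n/2 : ℕ) : ZMod n))) := by
    rw [Finset.mul_sum]
  rw [h1, h2, h3, h4]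
  ring

lemma P_max (hn8 : n % 8 = 2) (χ : ZMod n → Fin 2)
    (hP : (univ.filter fun x : ZMod n => χ x = χ (x + ((n/2 : ℕ) : ZMod n))).card = n) :
    pC n χ = qC n χ := by
  have hn2 : n % 2 = 0 := by omega
  have hall : ∀ x : ZMod n, χ x = χ (x + ((n/2 : ℕ) : ZMod n)) := by
    have hsub : (univ.filter fun x : ZMod n => χ x = χ (x + ((n/2 : ℕ) : ZMod n))) = univ := by
      apply Finset.eq_univ_of_card
      rw [hP]
      exact (ZMod.card n).symm
    intro x
    have := Finset.mem_univ x
    rw [← hsub, Finset.mem_filter] at this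
    exact this.2
  have hvalh : ((n/2 : ℕ) : ZMod n).val = n / 2 := ZMod.val_cast_of_lt (by omega)
  rw [pC, qC]
  refine Finset.card_nbij (fun x => x + ((n/2 : ℕ) : ZMod n)) ?_ ?_ ?_
  · intro x hx
    simp only [mem_coe, mem_filter, mem_univ, true_and] at hx ⊢
    obtain ⟨hpar, hχ⟩ := hx
    constructor
    · rw [val_add_mod2 n hn2, hvalh]; omega
    · rw [← hall x]; exact hχ
  · intro x _ y _ hxy
    simpa using hxy
  · intro y hy
    simp only [Finset.coe_filter, Set.mem_image, Set.mem_setOf_eq, mem_univ, true_and] at hy ⊢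
    obtain ⟨hpar, hχ⟩ := hy
    refine ⟨y + ((n/2 : ℕ) : ZMod n), ⟨?_, ?_⟩, ?_⟩
    · rw [val_add_mod2 n hn2, hvalh]; omega
    · rw [← hall y]; exact hχ
    · rw [add_assoc, half_add_half n hn2, add_zero]

lemma lower_bound (hn8 : n % 8 = 2) (h3 : ¬ (3 ∣ n)) (χ : ZMod n → Fin 2) :
    ((n : ℤ) - 2) * ((n : ℤ) - 6)
      ≤ 8 * (((apSets n).filter (fun s => ∀ x ∈ s, ∀ y ∈ s, χ x = χ y)).card : ℤ) := by
  have hn2 : n % 2 = 0 := by omega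
  have hsplit := T3_split n hn8 χ
  have hident := T3_card n hn8 χ
  have h2m := two_mul_mono n hn8 h3 χ
  obtain ⟨kk, hkk⟩ := P_parity n hn2 χ
  have hPleN : ((univ.filter fun x : ZMod n => χ x = χ (x + ((n/2 : ℕ) : ZMod n))).card : ℤ)
      ≤ (n : ℤ) := by
    exact_mod_cast Nat.cast_le.mpr (le_trans (Finset.card_filter_le _ _)
      (le_of_eq (by rw [card_univ, ZMod.card])))
  have hPmax := P_max n hn8 χ
  have hpqadd := pq_add n χ
  set c : ℤ := (((apSets n).filter (fun s => ∀ x ∈ s, ∀ y ∈ s, χ x = χ y)).card : ℤ) with hc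
  set A : ℤ := (aC n χ : ℤ) with hAdef
  set Pp : ℤ := (pC n χ : ℤ) with hPpdef
  set Qq : ℤ := (qC n χ : ℤ) with hQqdef
  set PP : ℤ := ((univ.filter fun x : ZMod n => χ x = χ (x + ((n/2 : ℕ) : ZMod n))).card : ℤ)
    with hPPdef
  have hPQ : Pp + Qq = A := by
    rw [hPpdef, hQqdef, hAdef, ← hpqadd]
    push_cast; ring
  have hmain : 2 * c = (n:ℤ)^2 - 3*n*A + 2*A^2 + 2*(Pp^2 + Qq^2) - n - PP := by
    rw [← hident, hsplit, h2m]
    push_cast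
    ring

  have key : 8*c - (((n:ℤ) - 2) * ((n:ℤ) - 6))
      = 3*((n:ℤ) - 2*A)^2 + 4*(Pp - Qq)^2 + 4*((n:ℤ) - PP) - 12 := by
    linear_combination 4*hmain + 4*(A + Pp + Qq)*hPQ
  clear_value c A Pp Qq PP
  clear hsplit hident h2m hpqadd hmain hc hAdef
  by_cases hA : A = ((n/2 : ℕ) : ℤ)
  · have hPQne : Pp - Qq ≠ 0 := by
      intro h
      omega
    have hsq : 1 ≤ (Pp - Qq)^2 := by
      have h1 : 1 ≤ |Pp - Qq| := Int.one_le_abs hPQne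
      nlinarith [abs_nonneg (Pp - Qq), sq_abs (Pp - Qq)]
    have hPne : PP ≠ (n : ℤ) := by
      intro h
      have hcard : (univ.filter fun x : ZMod n => χ x = χ (x + ((n/2 : ℕ) : ZMod n))).card = n := by
        rw [hPPdef] at h
        exact_mod_cast h
      apply hPQne
      rw [hPpdef, hQqdef, hPmax hcard, sub_self]
    have hPle2 : PP ≤ (n : ℤ) - 2 := by omega
    have hz : (n:ℤ) - 2*A = 0 := by omega
    rw [hz] at key
    nlinarith [key, hsq, hPle2]
  · have hsq : 4 ≤ ((n:ℤ) - 2*A)^2 := by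
      have h1 : (n:ℤ) - 2*A = 2 * (((n/2 : ℕ) : ℤ) - A) := by omega
      have h2 : ((n/2 : ℕ) : ℤ) - A ≠ 0 := fun h => hA (by omega)
      have h3' : 1 ≤ |((n/2 : ℕ) : ℤ) - A| := Int.one_le_abs h2
      have h4 : 1 ≤ (((n/2 : ℕ) : ℤ) - A)^2 := by
        nlinarith [abs_nonneg (((n/2 : ℕ) : ℤ) - A), sq_abs (((n/2 : ℕ) : ℤ) - A)]
      calc (4:ℤ) = 4 * 1 := by ring
        _ ≤ 4 * (((n/2 : ℕ) : ℤ) - A)^2 := by linarith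
        _ = ((n:ℤ) - 2*A)^2 := by rw [h1]; ring
    nlinarith [key, hsq, sq_nonneg (Pp - Qq), hPleN]


def chi0 : ZMod n → Fin 2 := fun x =>
  if x.val ≤ (n-2)/4 ∨ (n/2 ≤ x.val ∧ x.val < n/2 + (n-2)/4) then 1 else 0

lemma fin2_if_eq (A B : Prop) [Decidable A] [Decidable B] :
    ((if A then (1 : Fin 2) else 0) = (if B then 1 else 0)) ↔ (A ↔ B) := by
  split_ifs with h1 h2 h2 <;> simp_all

lemma chi0_eq_one (x : ZMod n) :
    chi0 n x = 1 ↔ (x.val ≤ (n-2)/4 ∨ (n/2 ≤ x.val ∧ x.val < n/2 + (n-2)/4)) := by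
  rw [chi0]
  split_ifs with h <;> simp [h]

lemma witness_a (hn8 : n % 8 = 2) : aC n (chi0 n) = n / 2 := by
  rw [aC]
  have hcong : (univ.filter fun x : ZMod n => chi0 n x = 1)
      = univ.filter (fun x : ZMod n =>
          (fun v => v ≤ (n-2)/4 ∨ (n/2 ≤ v ∧ v < n/2 + (n-2)/4)) x.val) := by
    apply Finset.filter_congr
    intro x _
    exact chi0_eq_one n x
  rw [hcong, card_val_filter n (fun v => v ≤ (n-2)/4 ∨ (n/2 ≤ v ∧ v < n/2 + (n-2)/4))]
  have hset : ((range n).filter fun v => v ≤ (n-2)/4 ∨ (n/2 ≤ v ∧ v < n/2 + (n-2)/4))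
      = range ((n-2)/4 + 1) ∪ Ico (n/2) (n/2 + (n-2)/4) := by
    ext m
    simp only [mem_filter, mem_range, mem_union, mem_Ico]
    omega
  rw [hset, Finset.card_union_of_disjoint, card_range, Nat.card_Ico]
  · omega
  · rw [Finset.disjoint_left]
    intro m hm1 hm2
    simp only [mem_range, mem_Ico] at hm1 hm2
    omega

lemma witness_p (hn8 : n % 8 = 2) : pC n (chi0 n) = (n-2)/4 + 1 := by
  rw [pC]
  have hcong : (univ.filter fun x : ZMod n => x.val % 2 = 0 ∧ chi0 n x = 1)
      = univ.filter (fun x : ZMod n =>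
          (fun v => v % 2 = 0 ∧ (v ≤ (n-2)/4 ∨ (n/2 ≤ v ∧ v < n/2 + (n-2)/4))) x.val) := by
    apply Finset.filter_congr
    intro x _
    simp only []
    rw [chi0_eq_one n x]
  rw [hcong, card_val_filter n
    (fun v => v % 2 = 0 ∧ (v ≤ (n-2)/4 ∨ (n/2 ≤ v ∧ v < n/2 + (n-2)/4)))]
  have hk2 : ((n-2)/4) % 2 = 0 := by omega
  have hset : ((range n).filter fun v => v % 2 = 0 ∧ (v ≤ (n-2)/4 ∨ (n/2 ≤ v ∧ v < n/2 + (n-2)/4)))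
      = (range ((n-2)/8 + 1)).image (fun j => 2 * j)
        ∪ (range ((n-2)/8)).image (fun j => n/2 + 1 + 2 * j) := by
    ext m
    simp only [mem_filter, mem_range, mem_union, mem_image]
    constructor
    · rintro ⟨h1, h2, h3 | h3⟩
      · left; exact ⟨m / 2, by omega, by omega⟩
      · right; exact ⟨(m - n/2 - 1) / 2, by omega, by omega⟩
    · rintro (⟨j, hj, rfl⟩ | ⟨j, hj, rfl⟩) <;> omega
  rw [hset, Finset.card_union_of_disjoint]
  · rw [Finset.card_image_of_injective _ (fun a b h => by omega),
      Finset.card_image_of_injective _ (fun a b h => by omega), card_range, card_range]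
    omega
  · rw [Finset.disjoint_left]
    rintro m hm1 hm2
    simp only [mem_image, mem_range] at hm1 hm2
    obtain ⟨j1, hj1, rfl⟩ := hm1
    obtain ⟨j2, hj2, he⟩ := hm2
    omega

lemma witness_P (hn8 : n % 8 = 2) :
    (univ.filter fun x : ZMod n => chi0 n x = chi0 n (x + ((n/2 : ℕ) : ZMod n))).card = n - 2 := by
  have hn2 : n % 2 = 0 := by omega
  have hvalh : ((n/2 : ℕ) : ZMod n).val = n / 2 := ZMod.val_cast_of_lt (by omega)
  have hcong : (univ.filter fun x : ZMod n => chi0 n x = chi0 n (x + ((n/2 : ℕ) : ZMod n)))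
      = univ.filter (fun x : ZMod n =>
          (fun v => ((if v ≤ (n-2)/4 ∨ (n/2 ≤ v ∧ v < n/2 + (n-2)/4) then (1 : Fin 2) else 0)
            = (if (v + n/2) % n ≤ (n-2)/4 ∨ (n/2 ≤ (v + n/2) % n ∧ (v + n/2) % n < n/2 + (n-2)/4)
              then (1 : Fin 2) else 0))) x.val) := by
    apply Finset.filter_congr
    intro x _
    simp only []
    have hv : (x + ((n/2 : ℕ) : ZMod n)).val = (x.val + n/2) % n := by
      rw [ZMod.val_add, hvalh]
    rw [chi0, chi0, hv]
  rw [hcong, card_val_filter n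
    (fun v => ((if v ≤ (n-2)/4 ∨ (n/2 ≤ v ∧ v < n/2 + (n-2)/4) then (1 : Fin 2) else 0)
      = (if (v + n/2) % n ≤ (n-2)/4 ∨ (n/2 ≤ (v + n/2) % n ∧ (v + n/2) % n < n/2 + (n-2)/4)
        then (1 : Fin 2) else 0)))]
  have hneg : ((range n).filter fun v =>
      ¬ ((if v ≤ (n-2)/4 ∨ (n/2 ≤ v ∧ v < n/2 + (n-2)/4) then (1 : Fin 2) else 0)
        = (if (v + n/2) % n ≤ (n-2)/4 ∨ (n/2 ≤ (v + n/2) % n ∧ (v + n/2) % n < n/2 + (n-2)/4)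
          then (1 : Fin 2) else 0)))
      = {(n-2)/4, (n-2)/4 + n/2} := by
    ext m
    simp only [mem_filter, mem_range, mem_insert, mem_singleton]
    constructor
    · rintro ⟨hmn, hne⟩
      rw [fin2_if_eq] at hne
      have hw : (m + n/2) % n = if m < n/2 then m + n/2 else m - n/2 := by
        split_ifs with h
        · exact Nat.mod_eq_of_lt (by omega)
        · rw [Nat.mod_eq_sub_mod (by omega)]
          have : m + n/2 - n = m - n/2 := by omega
          rw [this]
          exact Nat.mod_eq_of_lt (by omega)
      rw [hw] at hne
      split_ifs at hne <;> omega
    · intro hm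
      have hmn : m < n := by omega
      refine ⟨hmn, ?_⟩
      rw [fin2_if_eq]
      have hw : (m + n/2) % n = if m < n/2 then m + n/2 else m - n/2 := by
        split_ifs with h
        · exact Nat.mod_eq_of_lt (by omega)
        · rw [Nat.mod_eq_sub_mod (by omega)]
          have : m + n/2 - n = m - n/2 := by omega
          rw [this]
          exact Nat.mod_eq_of_lt (by omega)
      rw [hw]
      split_ifs with h <;> omega
  have hsplit := Finset.card_filter_add_card_filter_not (s := range n)
    (p := fun v =>
      ((if v ≤ (n-2)/4 ∨ (n/2 ≤ v ∧ v < n/2 + (n-2)/4) then (1 : Fin 2) else 0)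
        = (if (v + n/2) % n ≤ (n-2)/4 ∨ (n/2 ≤ (v + n/2) % n ∧ (v + n/2) % n < n/2 + (n-2)/4)
          then (1 : Fin 2) else 0)))
  rw [hneg, card_range] at hsplit
  have hc2 : ({(n-2)/4, (n-2)/4 + n/2} : Finset ℕ).card = 2 := by
    rw [Finset.card_insert_of_notMem (by simp; omega), Finset.card_singleton]
  omega

lemma witness_val (hn8 : n % 8 = 2) (h3 : ¬ (3 ∣ n)) :
    8 * (((apSets n).filter (fun s => ∀ x ∈ s, ∀ y ∈ s, chi0 n x = chi0 n y)).card : ℤ)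
      = ((n : ℤ) - 2) * ((n : ℤ) - 6) := by
  have hn2 : n % 2 = 0 := by omega
  have hsplit := T3_split n hn8 (chi0 n)
  have hident := T3_card n hn8 (chi0 n)
  have h2m := two_mul_mono n hn8 h3 (chi0 n)
  have hq : qC n (chi0 n) = (n-2)/4 := by
    have := pq_add n (chi0 n)
    rw [witness_a n hn8, witness_p n hn8] at this
    omega
  have hmain : 2 * (((apSets n).filter
        (fun s => ∀ x ∈ s, ∀ y ∈ s, chi0 n x = chi0 n y)).card : ℤ)
      = (n:ℤ)^2 - 3*n*(aC n (chi0 n)) + 2*(aC n (chi0 n))^2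
        + 2*((pC n (chi0 n))^2 + (qC n (chi0 n))^2) - n
        - ((univ.filter fun x : ZMod n => chi0 n x = chi0 n (x + ((n/2 : ℕ) : ZMod n))).card : ℤ) := by
    rw [← hident, hsplit, h2m]
    push_cast
    ring
  rw [witness_a n hn8, witness_p n hn8, hq, witness_P n hn8] at hmain
  have e1 : ((n / 2 : ℕ) : ℤ) = ((n : ℤ) - 2) / 4 * 2 + 1 := by omega
  have e2 : (((n-2)/4 + 1 : ℕ) : ℤ) = ((n : ℤ) - 2) / 4 + 1 := by omega
  have e3 : (((n-2)/4 : ℕ) : ℤ) = ((n : ℤ) - 2) / 4 := by omega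
  have e4 : ((n - 2 : ℕ) : ℤ) = (n : ℤ) - 2 := by omega
  have e5 : (n : ℤ) = 4 * (((n : ℤ) - 2) / 4) + 2 := by omega
  rw [e1, e2, e3, e4] at hmain
  linear_combination 4 * hmain + (3*(n:ℤ) - 12*(((n:ℤ)-2)/4) - 6) * e5

end

theorem stmt_14 (n : ℕ) [NeZero n] (h8 : n % 8 = 2) (h3 : ¬ (3 ∣ n)) :
    IsLeast {k : ℤ | ∃ χ : ZMod n → Fin 2, k = monoAPCount n χ}
      (((n : ℤ) - 2) * ((n : ℤ) - 6) / 8) := by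
  constructor
  · refine ⟨chi0 n, ?_⟩
    rw [← witness_val n h8 h3]
    show (8 * (((apSets n).filter
        (fun s => ∀ x ∈ s, ∀ y ∈ s, chi0 n x = chi0 n y)).card : ℤ)) / 8
      = ((monoAPCount n (chi0 n) : ℤ))
    rw [Int.mul_ediv_cancel_left _ (by norm_num : (8:ℤ) ≠ 0)]
    rfl
  · rintro k ⟨χ, rfl⟩
    have hlb := lower_bound n h8 h3 χ
    calc (((n:ℤ) - 2) * ((n:ℤ) - 6)) / 8
        ≤ (8 * (((apSets n).filter (fun s => ∀ x ∈ s, ∀ y ∈ s, χ x = χ y)).card : ℤ)) / 8 :=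
          Int.ediv_le_ediv (by norm_num) hlb
      _ = (((apSets n).filter (fun s => ∀ x ∈ s, ∀ y ∈ s, χ x = χ y)).card : ℤ) :=
          Int.mul_ediv_cancel_left _ (by norm_num)
      _ = (monoAPCount n χ : ℤ) := rfl
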